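/- For positive integers n', d, w', define 𝓔(n', d, w') = Σ_{x=1}^{n'} [ Σ_{i=x}^{n'} C(n',i)·(1/w')^i·((w'−1)/w')^{n'−i} ]^d. Fix positive integers n_l, n_h, d and an integer w ≥ 3. Then the function g(w_l) = 𝓔(n_l, d, w_l) − 𝓔(n_h, d, w − w_l) is monotone non-increasing on the integers w_l ∈ {1,…,w−1}: for 1 ≤ w_l ≤ w_l' ≤ w−1, g(w_l') ≤ g(w_l). -/
import Mathlib


/-- `𝓔 n' d w'` is the expected size of the minimum-size bucket across `d` rows
when `n'` element types are hashed uniformly at random into `w'` buckets per row. -/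
noncomputable def Ecal (n' d w' : ℕ) : ℝ :=
  ∑ x ∈ Finset.Icc 1 n',
    (∑ i ∈ Finset.Icc x n',
      (n'.choose i : ℝ) * (1 / (w' : ℝ)) ^ i
        * (((w' : ℝ) - 1) / (w' : ℝ)) ^ (n' - i)) ^ d

noncomputable def tail (n x : ℕ) (p : ℝ) : ℝ :=
  ∑ i ∈ Finset.Icc x n, (n.choose i : ℝ) * p ^ i * (1 - p) ^ (n - i)

lemma tail_zero (n : ℕ) (p : ℝ) : tail n 0 p = 1 := by
  unfold tail
  rw [show Finset.Icc 0 n = Finset.range (n + 1) by ext i; simp [Nat.lt_succ_iff]]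
  have h := add_pow p (1 - p) n
  have h2 : ∀ i ∈ Finset.range (n+1),
      (n.choose i : ℝ) * p ^ i * (1 - p) ^ (n - i)
        = p ^ i * (1 - p) ^ (n - i) * (n.choose i : ℝ) := by intros; ring
  rw [Finset.sum_congr rfl h2, ← h]
  norm_num

lemma tail_nonneg (n x : ℕ) {p : ℝ} (hp : 0 ≤ p) (hp1 : p ≤ 1) : 0 ≤ tail n x p := by
  unfold tail
  apply Finset.sum_nonneg
  intro i _
  have : (0:ℝ) ≤ 1 - p := by linarith
  positivity

lemma tail_anti_x (n x : ℕ) {p : ℝ} (hp : 0 ≤ p) (hp1 : p ≤ 1) :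
    tail n (x+1) p ≤ tail n x p := by
  unfold tail
  apply Finset.sum_le_sum_of_subset_of_nonneg
  · exact Finset.Icc_subset_Icc_left (Nat.le_succ x)
  · intro i _ _
    have : (0:ℝ) ≤ 1 - p := by linarith
    positivity

lemma tail_rec (n x : ℕ) (p : ℝ) :
    tail (n+1) (x+1) p = p * tail n x p + (1 - p) * tail n (x+1) p := by
  unfold tail
  have hmap : Finset.Icc (x+1) (n+1)
      = Finset.map ⟨Nat.succ, Nat.succ_injective⟩ (Finset.Icc x n) := by
    ext i
    simp only [Finset.mem_Icc, Finset.mem_map, Function.Embedding.coeFn_mk,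
      Nat.succ_eq_add_one]
    constructor
    · intro h; exact ⟨i - 1, ⟨by omega, by omega⟩, by omega⟩
    · rintro ⟨k, hk, rfl⟩; omega
  rw [hmap, Finset.sum_map]
  simp only [Function.Embedding.coeFn_mk]
  have hstep : ∀ k ∈ Finset.Icc x n,
      ((n+1).choose (k+1) : ℝ) * p ^ (k+1) * (1 - p) ^ (n + 1 - (k+1))
        = p * ((n.choose k : ℝ) * p ^ k * (1 - p) ^ (n - k))
          + (n.choose (k+1) : ℝ) * p ^ (k+1) * (1 - p) ^ (n - k) := by
    intro k hk
    rw [Nat.choose_succ_succ]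
    push_cast
    simp only [Nat.succ_eq_add_one, Nat.succ_sub_succ]
    ring
  rw [Finset.sum_congr rfl hstep, Finset.sum_add_distrib, ← Finset.mul_sum]
  congr 1
  -- second sum equals (1-p) * ∑_{j ∈ Icc (x+1) n} ...
  have h1 : ∑ k ∈ Finset.Icc x n, (n.choose (k+1) : ℝ) * p ^ (k+1) * (1 - p) ^ (n - k)
      = ∑ j ∈ Finset.Icc (x+1) (n+1), (n.choose j : ℝ) * p ^ j * (1 - p) ^ (n + 1 - j) := by
    rw [hmap, Finset.sum_map]
    simp only [Function.Embedding.coeFn_mk]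
    apply Finset.sum_congr rfl
    intro k hk
    congr 2
    omega
  rw [h1]
  rw [Finset.mul_sum]
  rw [← Finset.sum_subset (Finset.Icc_subset_Icc_right (Nat.le_succ n))
      (by
        intro j hj hj'
        simp only [Finset.mem_Icc] at hj hj'
        have : j = n + 1 := by omega
        simp [this, Nat.choose_succ_self])]
  apply Finset.sum_congr rfl
  intro j hj
  simp only [Finset.mem_Icc] at hj
  have : n + 1 - j = (n - j) + 1 := by omega
  rw [this]
  ring

lemma tail_mono (n : ℕ) : ∀ (x : ℕ), 1 ≤ x → ∀ (p q : ℝ), 0 ≤ p → p ≤ q → q ≤ 1 →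
    tail n x p ≤ tail n x q := by
  induction n with
  | zero =>
    intro x hx p q _ _ _
    unfold tail
    rw [Finset.Icc_eq_empty (by omega)]
    simp
  | succ n ih =>
    intro x hx p q hp hpq hq
    obtain ⟨y, rfl⟩ : ∃ y, x = y + 1 := ⟨x - 1, by omega⟩
    rw [tail_rec, tail_rec]
    set A := tail n y p with hA
    set A' := tail n y q with hA'
    set B := tail n (y+1) p with hB
    set B' := tail n (y+1) q with hB'
    have hp1 : p ≤ 1 := le_trans hpq hq
    have hq0 : 0 ≤ q := le_trans hp hpq
    have hAA' : A ≤ A' := by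
      rcases Nat.eq_zero_or_pos y with h | h
      · subst h; rw [hA, hA', tail_zero, tail_zero]
      · exact ih y h p q hp hpq hq
    have hBB' : B ≤ B' := ih (y+1) (by omega) p q hp hpq hq
    have hBA : B ≤ A := tail_anti_x n y hp hp1
    have hB0 : 0 ≤ B := tail_nonneg n (y+1) hp hp1
    nlinarith [mul_nonneg hq0 (sub_nonneg.mpr hAA'), mul_nonneg (by linarith : (0:ℝ) ≤ 1 - q) (sub_nonneg.mpr hBB'), mul_nonneg (sub_nonneg.mpr hpq) (sub_nonneg.mpr hBA)]

lemma Ecal_eq (n d w : ℕ) (hw : 1 ≤ w) :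
    Ecal n d w = ∑ x ∈ Finset.Icc 1 n, (tail n x (1 / (w:ℝ))) ^ d := by
  unfold Ecal tail
  have hw0 : (w:ℝ) ≠ 0 := by positivity
  have : ((w:ℝ) - 1) / (w:ℝ) = 1 - 1 / (w:ℝ) := by field_simp
  rw [this]

lemma Ecal_anti (n d : ℕ) {w1 w2 : ℕ} (h1 : 1 ≤ w1) (h12 : w1 ≤ w2) :
    Ecal n d w2 ≤ Ecal n d w1 := by
  have h2 : 1 ≤ w2 := le_trans h1 h12
  rw [Ecal_eq n d w1 h1, Ecal_eq n d w2 h2]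
  apply Finset.sum_le_sum
  intro x hx
  simp only [Finset.mem_Icc] at hx
  have hw1 : (1:ℝ) ≤ (w1:ℝ) := by exact_mod_cast h1
  have hw2 : (1:ℝ) ≤ (w2:ℝ) := by exact_mod_cast h2
  have hww : (w1:ℝ) ≤ (w2:ℝ) := by exact_mod_cast h12
  have hp : (0:ℝ) ≤ 1 / (w2:ℝ) := by positivity
  have hpq : 1 / (w2:ℝ) ≤ 1 / (w1:ℝ) := by
    apply one_div_le_one_div_of_le <;> linarith
  have hq : 1 / (w1:ℝ) ≤ 1 := by
    rw [div_le_one (by linarith)]; linarith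
  exact pow_le_pow_left₀ (tail_nonneg n x hp (le_trans hpq hq))
    (tail_mono n x hx.1 _ _ hp hpq hq) d

/-- In the Fair-Count-Min column-allocation problem, the function
`g(w_l) = 𝓔(n_l, d, w_l) − 𝓔(n_h, d, w − w_l)` is monotone non-increasing on
the integers `{1, …, w − 1}`, which justifies binary search. -/
theorem allocation_gap_antitone
    (nl nh d : ℕ) (hnl : 0 < nl) (hnh : 0 < nh) (hd : 0 < d)
    (w : ℕ) (hw : 3 ≤ w)
    (wl wl' : ℕ) (h1 : 1 ≤ wl) (h2 : wl ≤ wl') (h3 : wl' ≤ w - 1) :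
    Ecal nl d wl' - Ecal nh d (w - wl') ≤ Ecal nl d wl - Ecal nh d (w - wl) := by
  have hA : Ecal nl d wl' ≤ Ecal nl d wl := Ecal_anti nl d h1 h2
  have hB : Ecal nh d (w - wl) ≤ Ecal nh d (w - wl') :=
    Ecal_anti nh d (by omega) (by omega)
  linarith
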